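/- Let E be a real inner product space, let f : E → ℝ be differentiable with L-Lipschitz gradient ∇f (L ≥ 0), let U and V be subspaces of E, and let c ≥ 0 be a constant such that ⟨u, v⟩ ≤ c‖u‖‖v‖ for all u ∈ U and v ∈ V. If at a point θ ∈ E the gradient satisfies ∇f(θ) ∈ U, and the update Δ ∈ V, then the forgetting satisfies f(θ + Δ) - f(θ) ≤ c‖∇f(θ)‖‖Δ‖ + (L/2)‖Δ‖². -/

import Mathlib

open scoped RealInnerProductSpace

/-- Geometric forgetting bound. If `f` is differentiable with `L`-Lipschitz
gradient `g`, `U` and `V` are subspaces with `⟪u, v⟫ ≤ c‖u‖‖v‖` for all `u ∈ U`, `v ∈ V`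
(where `c ≥ 0` plays the role of the cosine of the minimum principal angle),
the gradient at `θ` lies in `U` and the update `Δ` lies in `V`, then
`f (θ + Δ) - f θ ≤ c‖g θ‖‖Δ‖ + (L/2)‖Δ‖²`. -/
theorem stmt_1 {E : Type*} [NormedAddCommGroup E] [InnerProductSpace ℝ E]
    (f : E → ℝ) (g : E → E) (L : ℝ) (hL : 0 ≤ L)
    (hgrad : ∀ x, HasFDerivAt f (innerSL ℝ (g x)) x)
    (hlip : ∀ x y, ‖g x - g y‖ ≤ L * ‖x - y‖)
    (U V : Submodule ℝ E) (c : ℝ) (hc : 0 ≤ c)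
    (hangle : ∀ u ∈ U, ∀ v ∈ V, ⟪u, v⟫ ≤ c * ‖u‖ * ‖v‖)
    (θ : E) (hθ : g θ ∈ U) (Δ : E) (hΔ : Δ ∈ V) :
    f (θ + Δ) - f θ ≤ c * ‖g θ‖ * ‖Δ‖ + (L / 2) * ‖Δ‖ ^ 2 := by
  set φ : ℝ → ℝ := fun t => f (θ + t • Δ) with hφ
  set B : ℝ → ℝ := fun t => f θ + t * ⟪g θ, Δ⟫ + L / 2 * t ^ 2 * ‖Δ‖ ^ 2 with hB
  have hpath : ∀ t : ℝ, HasDerivAt (fun s : ℝ => θ + s • Δ) Δ t := by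
    intro t
    simpa using ((hasDerivAt_id t).smul_const Δ).const_add θ
  have hφ' : ∀ t : ℝ, HasDerivAt φ ⟪g (θ + t • Δ), Δ⟫ t := by
    intro t
    have := (hgrad (θ + t • Δ)).comp_hasDerivAt t (hpath t)
    simpa [φ, Function.comp_def] using this
  have hB' : ∀ t : ℝ, HasDerivAt B (⟪g θ, Δ⟫ + L * t * ‖Δ‖ ^ 2) t := by
    intro t
    have h1 : HasDerivAt (fun t : ℝ => t * ⟪g θ, Δ⟫) ⟪g θ, Δ⟫ t := by
      simpa using (hasDerivAt_id t).mul_const ⟪g θ, Δ⟫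
    have h2 : HasDerivAt (fun t : ℝ => L / 2 * t ^ 2 * ‖Δ‖ ^ 2) (L * t * ‖Δ‖ ^ 2) t := by
      have := (((hasDerivAt_pow 2 t).const_mul (L / 2)).mul_const (‖Δ‖ ^ 2))
      refine this.congr_deriv ?_
      ring
    simpa [B, Pi.add_def] using (h1.const_add (f θ)).add h2
  have hcontφ : ContinuousOn φ (Set.Icc 0 1) :=
    fun t _ => (hφ' t).continuousAt.continuousWithinAt
  have hcontB : ContinuousOn B (Set.Icc 0 1) :=
    fun t _ => (hB' t).continuousAt.continuousWithinAt
  have hbound : ∀ t ∈ Set.Ico (0:ℝ) 1,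
      ⟪g (θ + t • Δ), Δ⟫ ≤ ⟪g θ, Δ⟫ + L * t * ‖Δ‖ ^ 2 := by
    intro t ht
    have h1 : ⟪g (θ + t • Δ) - g θ, Δ⟫ ≤ L * t * ‖Δ‖ ^ 2 := by
      calc ⟪g (θ + t • Δ) - g θ, Δ⟫ ≤ ‖g (θ + t • Δ) - g θ‖ * ‖Δ‖ :=
            real_inner_le_norm _ _
        _ ≤ (L * ‖(θ + t • Δ) - θ‖) * ‖Δ‖ := by
            apply mul_le_mul_of_nonneg_right (hlip _ _) (norm_nonneg _)
        _ = L * t * ‖Δ‖ ^ 2 := by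
            rw [show (θ + t • Δ) - θ = t • Δ by abel, norm_smul,
              Real.norm_eq_abs, abs_of_nonneg ht.1]
            ring
    have h2 : ⟪g (θ + t • Δ) - g θ, Δ⟫ = ⟪g (θ + t • Δ), Δ⟫ - ⟪g θ, Δ⟫ :=
      inner_sub_left _ _ _
    linarith [h2 ▸ h1]
  have key : φ 1 ≤ B 1 :=
    image_le_of_deriv_right_le_deriv_boundary hcontφ
      (fun t _ => (hφ' t).hasDerivWithinAt) (by simp [φ, B]) hcontB
      (fun t _ => (hB' t).hasDerivWithinAt) hbound ⟨zero_le_one, le_refl 1⟩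
  have hang := hangle (g θ) hθ Δ hΔ
  have : φ 1 = f (θ + Δ) := by simp [φ]
  have hb1 : B 1 = f θ + ⟪g θ, Δ⟫ + L / 2 * ‖Δ‖ ^ 2 := by simp [B]
  rw [this, hb1] at key
  linarith
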